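/- (Multiplication formula, Theorem 5.) Let l ≥ 1 be an odd integer, h any integer, m ≥ 0 an integer, and x a real number. Then ((1+q)/(1+q^l)) · [l]_q^m · Σ_{i=0}^{l−1} q^{hi} (−1)^i E_{m,q^l}^{(h,1)}((x+i)/l) = E_{m,q}^{(h,1)}(x). -/
import Mathlib


open Finset

/-- The q-number `[x]_q = (1 - q^x)/(1 - q)`, with `q^x = exp (x * log q)` (rpow). -/
noncomputable def qNum (q x : ℝ) : ℝ := (1 - q ^ x) / (1 - q)

/-- `[l]_{-q} = (1 - (-q)^l)/(1 + q)` for a natural number `l`. -/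
noncomputable def qNumNeg (q : ℝ) (l : ℕ) : ℝ := (1 - (-q) ^ l) / (1 + q)

/-- The higher-order q-Euler polynomial
`E_{m,q}^{(h,k)}(x) = ((1+q)^k/(1-q)^m) * Σ_{j=0}^m C(m,j) (-1)^j q^{jx} / Π_{i=0}^{k-1} (1 + q^{h+j-i})`. -/
noncomputable def qE (q : ℝ) (h : ℤ) (k m : ℕ) (x : ℝ) : ℝ :=
  ((1 + q) ^ k / (1 - q) ^ m) *
    ∑ j ∈ Finset.range (m + 1),
      (m.choose j : ℝ) * (-1) ^ j * q ^ ((j : ℝ) * x) /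
        ∏ i ∈ Finset.range k, (1 + q ^ ((h : ℝ) + (j : ℝ) - (i : ℝ)))

theorem stmt_8 (q : ℝ) (hq : 0 < q) (hq1 : q ≠ 1) (l : ℕ) (hl : 1 ≤ l) (hodd : Odd l)
    (h : ℤ) (m : ℕ) (x : ℝ) :
    ((1 + q) / (1 + q ^ l)) * qNum q l ^ m *
        ∑ i ∈ Finset.range l,
          q ^ (h * (i : ℤ)) * (-1 : ℝ) ^ i * qE (q ^ l) h 1 m ((x + i) / l)
      = qE q h 1 m x := by
  have hq0 : (0:ℝ) ≤ q := hq.le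
  have hlne : l ≠ 0 := by omega
  have hlR : (l:ℝ) ≠ 0 := Nat.cast_ne_zero.mpr hlne
  have hpos : ∀ y : ℝ, (0:ℝ) < q ^ y := fun y => Real.rpow_pos_of_pos hq y
  have h1q : (1:ℝ) - q ≠ 0 := sub_ne_zero.mpr fun h => hq1 h.symm
  have hql1 : q ^ l ≠ 1 := by
    rcases lt_or_gt_of_ne hq1 with hlt | hgt
    · exact ne_of_lt (pow_lt_one₀ hq0 hlt hlne)
    · exact ne_of_gt (one_lt_pow₀ hgt hlne)
  have h1ql : (1:ℝ) - q ^ l ≠ 0 := sub_ne_zero.mpr fun h => hql1 h.symm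
  have hqlpos : (0:ℝ) < q ^ l := pow_pos hq l
  have h1pql : (1:ℝ) + q ^ l ≠ 0 := by positivity
  -- base change: rpow with base q^l
  have hbase : ∀ y : ℝ, (q ^ l : ℝ) ^ y = q ^ ((l:ℝ) * y) := by
    intro y
    rw [← Real.rpow_natCast q l, ← Real.rpow_mul hq0]
  -- inner geometric sum
  have inner : ∀ j : ℕ,
      (∑ i ∈ Finset.range l, q ^ ((h:ℝ) * i) * (-1:ℝ) ^ i * q ^ ((j:ℝ) * (x + i)))
        = q ^ ((j:ℝ) * x) * (1 + q ^ ((l:ℝ) * ((h:ℝ) + j))) / (1 + q ^ ((h:ℝ) + (j:ℝ))) := by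
    intro j
    set r : ℝ := q ^ ((h:ℝ) + (j:ℝ)) with hr
    have hrpos : 0 < r := hpos _
    have step : ∀ i ∈ Finset.range l,
        q ^ ((h:ℝ) * i) * (-1:ℝ) ^ i * q ^ ((j:ℝ) * (x + i))
          = q ^ ((j:ℝ) * x) * (-r) ^ i := by
      intro i _
      have h1 : (-r) ^ i = (-1:ℝ) ^ i * r ^ i := by
        rw [neg_pow]
      have h2 : r ^ i = q ^ (((h:ℝ) + (j:ℝ)) * (i:ℝ)) := by
        rw [hr, ← Real.rpow_natCast (q ^ ((h:ℝ) + (j:ℝ))) i, ← Real.rpow_mul hq0]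
      have e1 : q ^ ((j:ℝ) * (x + i)) = q ^ ((j:ℝ) * x) * q ^ ((j:ℝ) * i) := by
        rw [← Real.rpow_add hq, mul_add]
      have e2 : q ^ (((h:ℝ) + (j:ℝ)) * (i:ℝ)) = q ^ ((h:ℝ) * i) * q ^ ((j:ℝ) * i) := by
        rw [← Real.rpow_add hq, add_mul]
      rw [h1, h2, e1, e2]; ring
    rw [Finset.sum_congr rfl step, ← Finset.mul_sum]
    have hrne : (-r) ≠ 1 := by nlinarith
    have hrl : r ^ l = q ^ ((l:ℝ) * ((h:ℝ) + (j:ℝ))) := by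
      rw [hr, ← Real.rpow_natCast (q ^ ((h:ℝ) + (j:ℝ))) l, ← Real.rpow_mul hq0,
        mul_comm ((h:ℝ) + (j:ℝ)) (l:ℝ)]
    have hnp : (-r) ^ l = -(r ^ l) := hodd.neg_pow r
    have hd : (-r) - 1 ≠ 0 := by nlinarith
    have hd2 : (1:ℝ) + r ≠ 0 := by nlinarith
    rw [geom_sum_eq hrne, hnp, hrl]
    field_simp
    ring
  -- unfold and normalize
  have hexp : ∀ (i j : ℕ), (l:ℝ) * ((j:ℝ) * ((x + i) / l)) = (j:ℝ) * (x + i) := by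
    intro i j; field_simp
  have hzpow : ∀ i : ℕ, q ^ (h * (i:ℤ)) = q ^ ((h:ℝ) * (i:ℝ)) := by
    intro i
    rw [← Real.rpow_intCast q (h * i)]
    push_cast
    ring_nf
  simp only [qE, qNum, Finset.prod_range_one, pow_one, Nat.cast_zero, sub_zero,
    Real.rpow_natCast, hbase, hexp, hzpow]
  -- now: C1 * Σ_i a_i * (K * Σ_j g j i) = C2 * Σ_j t j
  simp only [Finset.mul_sum]
  rw [Finset.sum_comm]
  have perj : ∀ j ∈ Finset.range (m + 1),
      (∑ i ∈ Finset.range l, q ^ ((h:ℝ) * (i:ℝ)) * (-1:ℝ) ^ i *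
          ((1 + q ^ l) / (1 - q ^ l) ^ m *
            ((m.choose j : ℝ) * (-1) ^ j * q ^ ((j:ℝ) * (x + i)) /
              (1 + q ^ ((l:ℝ) * ((h:ℝ) + (j:ℝ)))))))
        = (1 + q ^ l) / (1 - q ^ l) ^ m *
            ((m.choose j : ℝ) * (-1) ^ j * q ^ ((j:ℝ) * x) / (1 + q ^ ((h:ℝ) + (j:ℝ)))) := by
    intro j _
    have hD : (1:ℝ) + q ^ ((l:ℝ) * ((h:ℝ) + (j:ℝ))) ≠ 0 := by
      have := hpos ((l:ℝ) * ((h:ℝ) + (j:ℝ))); linarith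
    have hD2 : (1:ℝ) + q ^ ((h:ℝ) + (j:ℝ)) ≠ 0 := by
      have := hpos ((h:ℝ) + (j:ℝ)); linarith
    have step : ∀ i ∈ Finset.range l,
        q ^ ((h:ℝ) * (i:ℝ)) * (-1:ℝ) ^ i *
          ((1 + q ^ l) / (1 - q ^ l) ^ m *
            ((m.choose j : ℝ) * (-1) ^ j * q ^ ((j:ℝ) * (x + i)) /
              (1 + q ^ ((l:ℝ) * ((h:ℝ) + (j:ℝ))))))
        = ((1 + q ^ l) / (1 - q ^ l) ^ m * ((m.choose j : ℝ) * (-1) ^ j /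
              (1 + q ^ ((l:ℝ) * ((h:ℝ) + (j:ℝ)))))) *
            (q ^ ((h:ℝ) * (i:ℝ)) * (-1:ℝ) ^ i * q ^ ((j:ℝ) * (x + i))) := by
      intro i _; ring
    rw [Finset.sum_congr rfl step, ← Finset.mul_sum, inner j]
    field_simp
  have hC : (1 + q) / (1 + q ^ l) * ((1 - q ^ l) / (1 - q)) ^ m *
      ((1 + q ^ l) / (1 - q ^ l) ^ m) = (1 + q) / (1 - q) ^ m := by
    rw [div_pow]
    field_simp
  refine Finset.sum_congr rfl fun j hj => ?_
  rw [← Finset.mul_sum, perj j hj, ← mul_assoc, hC]
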